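/- Let Δ be a simplicial complex of dimension d-1 and suppose that for every face F ∈ Δ (including the empty face) the reduced cohomology H̃^i(lk F; k) vanishes for all i < d - 1 - |F| (i.e., Δ is Cohen–Macaulay over k in the Reisner sense). Then for every face F, the link lk F is pure of dimension d - 1 - |F|. -/
import Mathlib


/-- The faces of cardinality `j` of a complex `K` (so dimension `j - 1`). -/
def faces {n : ℕ} (K : Set (Finset (Fin n))) (j : ℤ) :=
  {σ : Finset (Fin n) // σ ∈ K ∧ (σ.card : ℤ) = j}

/-- Simplicial cochains (with the empty face included, giving *reduced* cohomology):
a cochain of cohomological dimension `i` lives at level `j = i + 1`. -/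
abbrev cochain {n : ℕ} (kk : Type*) (K : Set (Finset (Fin n))) (j : ℤ) :=
  faces K j → kk

attribute [local instance] Classical.propDecidable

/-- The simplicial coboundary map. -/
noncomputable def coboundary {n : ℕ} (kk : Type*) [Field kk]
    (K : Set (Finset (Fin n))) (j : ℤ) (f : cochain kk K j) : cochain kk K (j + 1) :=
  fun σ => ∑ v ∈ σ.1, (-1 : kk) ^ ((σ.1.filter (fun w => w < v)).card) *
    (if h : σ.1.erase v ∈ K ∧ (((σ.1.erase v).card : ℤ) = j) then f ⟨σ.1.erase v, h⟩ else 0)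

/-- Vanishing of the reduced simplicial cohomology `H̃^i(K; kk)`:
every `i`-cocycle is a coboundary. -/
def reducedCohVanish {n : ℕ} (kk : Type*) [Field kk]
    (K : Set (Finset (Fin n))) (i : ℤ) : Prop :=
  ∀ f : cochain kk K (i + 1), coboundary kk K (i + 1) f = 0 →
    ∃ g : cochain kk K i, coboundary kk K i g = f

/-- The link of a face `F`. -/
def link {n : ℕ} (Δ : Set (Finset (Fin n))) (F : Finset (Fin n)) : Set (Finset (Fin n)) :=
  {G | G ∈ Δ ∧ F ∩ G = ∅ ∧ F ∪ G ∈ Δ}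

/-- If `Δ` is a simplicial complex of dimension `d-1` that is Cohen–Macaulay over `kk`
in the Reisner sense (all links have vanishing reduced cohomology below top dimension),
then the link of every face `F` is pure of dimension `d - 1 - |F|`. -/
theorem stmt13 {n d : ℕ} (kk : Type*) [Field kk] (Δ : Set (Finset (Fin n)))
    (hΔ : ∀ s ∈ Δ, ∀ t ⊆ s, t ∈ Δ) (hne : ∅ ∈ Δ)
    (hdim : (∃ σ ∈ Δ, σ.card = d) ∧ ∀ σ ∈ Δ, σ.card ≤ d)
    (hCM : ∀ F ∈ Δ, ∀ i : ℤ, i < (d : ℤ) - 1 - F.card →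
      reducedCohVanish kk (link Δ F) i) :
    ∀ F ∈ Δ, ∀ G ∈ link Δ F, (∀ G' ∈ link Δ F, G ⊆ G' → G' = G) →
      G.card = d - F.card := by
  intro F hF G hG hmax
  obtain ⟨hGΔ, hFG, hFGΔ⟩ := hG
  have hdisj : F.card + G.card = (F ∪ G).card := by
    rw [Finset.card_union_of_disjoint (Finset.disjoint_iff_inter_eq_empty.mpr hFG)]
  have hle : F.card + G.card ≤ d := by rw [hdisj]; exact hdim.2 _ hFGΔ
  have hge : ¬ (F.card + G.card < d) := by
    intro hlt
    have hKey : ∀ H ∈ link Δ (F ∪ G), H = ∅ := by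
      intro H hH
      obtain ⟨hHΔ, hint, hunion⟩ := hH
      have hGH : G ∪ H ∈ link Δ F := by
        refine ⟨hΔ _ hunion _ ?_, ?_, ?_⟩
        · intro x hx; simp only [Finset.mem_union] at hx ⊢; tauto
        · apply Finset.eq_empty_iff_forall_notMem.mpr
          intro x hx
          simp only [Finset.mem_inter, Finset.mem_union] at hx
          rcases hx.2 with h | h
          · exact Finset.eq_empty_iff_forall_notMem.mp hFG x
              (Finset.mem_inter.mpr ⟨hx.1, h⟩)
          · exact Finset.eq_empty_iff_forall_notMem.mp hint x
              (Finset.mem_inter.mpr ⟨Finset.mem_union_left _ hx.1, h⟩)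
        · rw [← Finset.union_assoc]; exact hunion
      have hEq := hmax _ hGH Finset.subset_union_left
      apply Finset.eq_empty_iff_forall_notMem.mpr
      intro x hx
      have hxG : x ∈ G := by rw [← hEq]; exact Finset.mem_union_right _ hx
      exact Finset.eq_empty_iff_forall_notMem.mp hint x
        (Finset.mem_inter.mpr ⟨Finset.mem_union_right _ hxG, hx⟩)
    have hcard : ((F ∪ G).card : ℤ) < d := by
      rw [← hdisj]; exact_mod_cast hlt
    have hv := hCM (F ∪ G) hFGΔ (-1) (by linarith)
    set K := link Δ (F ∪ G) with hK
    have hvf := hv (fun _ => 1) ?_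
    · obtain ⟨g, hg⟩ := hvf
      have hmem : (∅ : Finset (Fin n)) ∈ K := by
        refine ⟨hne, by simp, by simpa using hFGΔ⟩
      have h0 : ((∅ : Finset (Fin n)).card : ℤ) = -1 + 1 := by simp
      have := congrFun hg ⟨∅, hmem, h0⟩
      simp only [coboundary, Finset.sum_empty] at this
      exact one_ne_zero this.symm
    · funext σ
      exfalso
      have h1 : σ.1 = ∅ := hKey _ σ.2.1
      have h2 := σ.2.2
      rw [h1] at h2
      simp at h2
  omega
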